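/- arXiv:1211.0746 — 3 statements merged into one kernel-verified Lean document; each statement's English description precedes it below -/
import Mathlib

section
/- Let φ : Γ̃ → G have conjugation-stabilizer exactly Z(G). Suppose c, c' ∈ Γ \ Γ̃ and g, g' ∈ G satisfy φ ∘ Ad_c = Ad_g ∘ φ and φ ∘ Ad_{c'} = Ad_{g'} ∘ φ, and set z = g² φ(c²)⁻¹, z' = (g')² φ((c')²)⁻¹ (both in Z(G)). Then z' z⁻¹ ∈ 2Z(G), i.e. z' z⁻¹ is the square of a central element. Consequently the class [z] ∈ Z(G)/2Z(G) is independent of the choice of c and g. -/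
/-!
Write `c' = c a` with `a = c⁻¹ c' ∈ Γ̃`. Then `Ad_{c'} = Ad_c ∘ Ad_a` on `Γ̃`, so `g'` and `g φ(a)`
both intertwine `Ad_{c'}` with `φ`, and the stabilizer hypothesis gives `g' = g φ(a) t` with `t`
central. Since `c'² = c² (c⁻¹ a c) a` and `φ(c⁻¹ a c) = g⁻¹ φ(a) g`, a direct computation in `G`
gives `z' = t² z`.
-/

theorem indexTwoNormal {Γ : Type*} [Group Γ] (H : Subgroup Γ) (h : H.index = 2) :
    H.Normal := by
  constructor
  intro n hn g
  rw [Subgroup.mul_mem_iff_of_index_two h, Subgroup.mul_mem_iff_of_index_two h, inv_mem_iff]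
  simp [hn]

/-- The automorphism `Ad_c : x ↦ c x c⁻¹` of an index-two (hence normal) subgroup. -/
def adSub {Γ : Type*} [Group Γ] (H : Subgroup Γ) (h : H.index = 2) (c : Γ) : H →* H where
  toFun x := ⟨c * x * c⁻¹, (indexTwoNormal H h).conj_mem x x.2 c⟩
  map_one' := by ext; simp
  map_mul' x y := by ext; simp [mul_assoc]

theorem inv_mul_mem_center_of_conj_map_eq {K G : Type*} [Group K] [Group G] (φ : K →* G)
    (hZ : ∀ h : G, (∀ x : K, h * φ x * h⁻¹ = φ x) ↔ h ∈ Subgroup.center G) {g g' : G}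
    (h : ∀ x : K, g * φ x * g⁻¹ = g' * φ x * g'⁻¹) : g⁻¹ * g' ∈ Subgroup.center G := by
  refine (hZ _).mp fun x => ?_
  calc g⁻¹ * g' * φ x * (g⁻¹ * g')⁻¹ = g⁻¹ * (g' * φ x * g'⁻¹) * g := by group
    _ = φ x := by rw [← h]; group

theorem sq_mul_central_mul_inv_eq {G : Type*} [Group G] (g p P t : G)
    (ht : t ∈ Subgroup.center G) :
    (g * p * t) ^ 2 * (P * (g⁻¹ * p * g) * p)⁻¹ * (g ^ 2 * P⁻¹)⁻¹ = t ^ 2 := by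
  have hcomm : Commute (g * p) t := Subgroup.mem_center_iff.mp ht (g * p)
  have hsq : (g * p * t) ^ 2 = t ^ 2 * (g * p) ^ 2 := by
    rw [hcomm.mul_pow, (hcomm.pow_pow 2 2).eq]
  rw [hsq, sq (g * p)]
  group

namespace adSub

variable {Γ : Type*} [Group Γ] {H : Subgroup Γ} (h2 : H.index = 2)

theorem apply_mul_coe (c : Γ) (a x : H) :
    adSub H h2 (c * a) x = adSub H h2 c (a * x * a⁻¹) := by
  ext
  simp only [adSub, MonoidHom.coe_mk, OneHom.coe_mk, Subgroup.coe_mul, InvMemClass.coe_inv]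
  group

variable {G : Type*} [Group G] {φ : H →* G} {c : Γ} {g : G}
  (hg : ∀ x : H, φ (adSub H h2 c x) = g * φ x * g⁻¹)
include hg

theorem map_apply_mul_coe (a x : H) :
    φ (adSub H h2 (c * a) x) = g * φ a * φ x * (g * φ a)⁻¹ := by
  rw [apply_mul_coe, hg, map_mul, map_mul, map_inv]
  group

theorem map_sq_mul_coe (a : H) :
    φ ⟨(c * a) ^ 2, Subgroup.sq_mem_of_index_two h2 _⟩ =
      φ ⟨c ^ 2, Subgroup.sq_mem_of_index_two h2 c⟩ * (g⁻¹ * φ a * g) * φ a := by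
  let b : H := ⟨c⁻¹ * a * c, by simpa using (indexTwoNormal H h2).conj_mem a a.2 c⁻¹⟩
  have hb : φ b = g⁻¹ * φ a * g := by
    have hcb : adSub H h2 c b = a := by
      ext
      simp only [adSub, b, MonoidHom.coe_mk, OneHom.coe_mk]
      group
    rw [← hcb, hg]
    group
  have hsq : (⟨(c * a) ^ 2, Subgroup.sq_mem_of_index_two h2 _⟩ : H) =
      ⟨c ^ 2, Subgroup.sq_mem_of_index_two h2 c⟩ * b * a := by
    ext
    simp only [b, Subgroup.coe_mul, sq]
    group
  rw [hsq, map_mul, map_mul, hb]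

end adSub

/-- The class of `z = g² φ(c²)⁻¹` in `Z(G)/2Z(G)` is independent of the
choices of `c ∈ Γ \ Γ̃` and of `g`: for two choices, `z' z⁻¹` is the square of a central
element. -/
theorem obstruction_class_independent {Γ G : Type*} [Group Γ] [Group G] (H : Subgroup Γ)
    (h2 : H.index = 2) (c c' : Γ) (hc : c ∉ H) (hc' : c' ∉ H) (φ : H →* G) (g g' z z' : G)
    (hZ : ∀ h : G, (∀ x : H, h * φ x * h⁻¹ = φ x) ↔ h ∈ Subgroup.center G)
    (hg : ∀ x : H, φ (adSub H h2 c x) = g * φ x * g⁻¹)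
    (hg' : ∀ x : H, φ (adSub H h2 c' x) = g' * φ x * g'⁻¹)
    (hz : g ^ 2 * (φ ⟨c ^ 2, Subgroup.sq_mem_of_index_two h2 c⟩)⁻¹ = z)
    (hz' : g' ^ 2 * (φ ⟨c' ^ 2, Subgroup.sq_mem_of_index_two h2 c'⟩)⁻¹ = z') :
    ∃ t ∈ Subgroup.center G, z' * z⁻¹ = t ^ 2 := by
  obtain ⟨a, rfl⟩ : ∃ a : H, c * a = c' := by
    refine ⟨⟨c⁻¹ * c', ?_⟩, mul_inv_cancel_left c c'⟩
    rw [Subgroup.mul_mem_iff_of_index_two h2, inv_mem_iff]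
    exact iff_of_false hc hc'
  have ht : (g * φ a)⁻¹ * g' ∈ Subgroup.center G :=
    inv_mul_mem_center_of_conj_map_eq φ hZ fun x => by
      rw [← adSub.map_apply_mul_coe h2 hg, hg']
  refine ⟨_, ht, ?_⟩
  have key := sq_mul_central_mul_inv_eq g (φ a) (φ ⟨c ^ 2, Subgroup.sq_mem_of_index_two h2 c⟩) _ ht
  rwa [mul_inv_cancel_left, ← adSub.map_sq_mul_coe h2 hg, hz, hz'] at key
end

section
/- Let S = {s ∈ Z(G) : s² = e} act on Hom_τ^good(Γ,G)/G (conjugacy classes of homomorphisms Γ → G whose restriction to Γ̃ has stabilizer Z(G)) by s·[φ] = [s·φ] where (s·φ)|_{Γ̃} = φ|_{Γ̃} and (s·φ)(x) = s φ(x) for x ∉ Γ̃. Then this action is free: if s·[φ] = [φ], then s = e. -/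
open scoped Classical in
/-- `s · f`: modify `f` by the central element `s` off the index-two subgroup `H`. -/
noncomputable def sDot {Γ G : Type*} [Group Γ] [Group G] (H : Subgroup Γ) (s : G)
    (f : Γ → G) : Γ → G :=
  fun x => if x ∈ H then f x else s * f x

section sDot

variable {Γ G : Type*} [Group Γ] [Group G] {H : Subgroup Γ} {s : G} {f : Γ → G} {x : Γ}

theorem sDot_apply_of_mem (hx : x ∈ H) : sDot H s f x = f x := if_pos hx

theorem sDot_apply_of_notMem (hx : x ∉ H) : sDot H s f x = s * f x := if_neg hx

theorem conj_eq_on_of_sDot_eq_conj {h : G} (hconj : ∀ x, sDot H s f x = h * f x * h⁻¹)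
    (x : H) : h * f x * h⁻¹ = f x :=
  (hconj x).symm.trans (sDot_apply_of_mem x.2)

theorem eq_one_of_sDot_apply_eq_self (hx : x ∉ H) (hfix : sDot H s f x = f x) : s = 1 := by
  rw [sDot_apply_of_notMem hx] at hfix
  exact mul_eq_right.mp hfix

end sDot

theorem conj_eq_self_of_mem_center {G : Type*} [Group G] {h : G} (hh : h ∈ Subgroup.center G)
    (g : G) : h * g * h⁻¹ = g := by
  rw [← Subgroup.mem_center_iff.mp hh g, mul_inv_cancel_right]

theorem sDot_action_free_general {Γ G : Type*} [Group Γ] [Group G] (H : Subgroup Γ)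
    (c : Γ) (hc : c ∉ H) (s : G)
    (φ : Γ →* G)
    (hZ : ∀ h : G, (∀ x : H, h * φ x * h⁻¹ = φ x) ↔ h ∈ Subgroup.center G)
    (h : G) (hconj : ∀ x : Γ, sDot H s ⇑φ x = h * φ x * h⁻¹) :
    s = 1 := by
  have hcentral : h ∈ Subgroup.center G := (hZ h).mp (conj_eq_on_of_sDot_eq_conj hconj)
  refine eq_one_of_sDot_apply_eq_self (f := φ) hc ?_
  rw [hconj c, conj_eq_self_of_mem_center hcentral]

/-- The action of `{s ∈ Z(G) : s² = e}` on conjugacy classes of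
homomorphisms `Γ → G` whose restriction to `Γ̃` has stabilizer `Z(G)` is free:
if `s·φ` is conjugate to `φ`, then `s = e`. -/
theorem sDot_action_free {Γ G : Type*} [Group Γ] [Group G] (H : Subgroup Γ)
    (h2 : H.index = 2) (c : Γ) (hc : c ∉ H) (s : G)
    (hs : s ∈ Subgroup.center G) (hs2 : s ^ 2 = 1)
    (φ : Γ →* G)
    (hZ : ∀ h : G, (∀ x : H, h * φ x * h⁻¹ = φ x) ↔ h ∈ Subgroup.center G)
    (h : G) (hconj : ∀ x : Γ, sDot H s ⇑φ x = h * φ x * h⁻¹) :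
    s = 1 :=
  sDot_action_free_general H c hc s φ hZ h hconj
end

section
/- Let φ, φ' : Γ → G be homomorphisms whose restrictions to Γ̃ have conjugation-stabilizer exactly Z(G), and suppose φ'|_{Γ̃} = Ad_h ∘ (φ|_{Γ̃}) for some h ∈ G. Then s := φ(c)⁻¹ h⁻¹ φ'(c) h lies in Z(G), satisfies s² = e, and s·φ = Ad_{h⁻¹} ∘ φ'. Hence the S-action on fibers of the restriction map is transitive: [φ'] = s·[φ]. -/
/-!
Put `ψ := Ad_{h⁻¹} ∘ φ'`, a homomorphism agreeing with `φ` on `Γ̃`, so that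
`s = φ(c)⁻¹ ψ(c)`. Applying `φ = ψ` to `c x c⁻¹ ∈ Γ̃` shows that `s` centralizes `φ(Γ̃)`,
hence is central. Then `φ = ψ` at `c² ∈ Γ̃` gives `s² = 1`, and at `c⁻¹ x ∈ Γ̃` (for `x ∉ Γ̃`)
gives `ψ(x) = s φ(x)`.
-/

section AgreeOnSubgroup

variable {Γ G : Type*} [Group Γ] [Group G] {H : Subgroup Γ} {φ ψ : Γ →* G}

theorem inv_apply_mul_apply_conj_eq_of_eqOn (hH : H.Normal) (hφψ : ∀ x ∈ H, ψ x = φ x)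
    (c : Γ) (x : H) : (φ c)⁻¹ * ψ c * φ x * ((φ c)⁻¹ * ψ c)⁻¹ = φ x := by
  have hconj : ψ (c * x * c⁻¹) = φ (c * x * c⁻¹) := hφψ _ (hH.conj_mem x x.2 c)
  simp only [map_mul, map_inv, hφψ x x.2] at hconj
  calc (φ c)⁻¹ * ψ c * φ x * ((φ c)⁻¹ * ψ c)⁻¹
      = (φ c)⁻¹ * (ψ c * φ x * (ψ c)⁻¹) * φ c := by group
    _ = φ x := by rw [hconj]; group

theorem inv_apply_mul_apply_sq_eq_one_of_eqOn (hφψ : ∀ x ∈ H, ψ x = φ x) {c : Γ}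
    (hcc : c * c ∈ H) (hcomm : Commute ((φ c)⁻¹ * ψ c) (φ c)) :
    ((φ c)⁻¹ * ψ c) ^ 2 = 1 := by
  have hsq : ψ (c * c) = φ (c * c) := hφψ _ hcc
  rw [map_mul, map_mul] at hsq
  calc ((φ c)⁻¹ * ψ c) ^ 2 = (φ c)⁻¹ * ψ c * (φ c)⁻¹ * ψ c := by rw [sq, ← mul_assoc]
    _ = (φ c)⁻¹ * ((φ c)⁻¹ * ψ c) * ψ c := by rw [hcomm.inv_right.eq]
    _ = (φ c * φ c)⁻¹ * (ψ c * ψ c) := by group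
    _ = 1 := by rw [hsq]; group

theorem apply_eq_inv_apply_mul_apply_mul_of_eqOn (hφψ : ∀ x ∈ H, ψ x = φ x) {c x : Γ}
    (hx : c⁻¹ * x ∈ H) (hcomm : Commute ((φ c)⁻¹ * ψ c) (φ c)) :
    ψ x = (φ c)⁻¹ * ψ c * φ x := by
  have hcx : ψ (c⁻¹ * x) = φ (c⁻¹ * x) := hφψ _ hx
  simp only [map_mul, map_inv] at hcx
  calc ψ x = ψ c * ((ψ c)⁻¹ * ψ x) := by group
    _ = φ c * ((φ c)⁻¹ * ψ c) * (φ c)⁻¹ * φ x := by rw [hcx]; group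
    _ = (φ c)⁻¹ * ψ c * φ x := by rw [← hcomm.eq]; group

theorem sDot_inv_apply_mul_apply_eq_of_eqOn (h2 : H.index = 2) (hφψ : ∀ x ∈ H, ψ x = φ x)
    {c : Γ} (hc : c ∉ H) (hcomm : Commute ((φ c)⁻¹ * ψ c) (φ c)) (x : Γ) :
    sDot H ((φ c)⁻¹ * ψ c) φ x = ψ x := by
  by_cases hxH : x ∈ H
  · simp only [sDot, if_pos hxH, hφψ x hxH]
  · have hcx : c⁻¹ * x ∈ H := by
      rw [Subgroup.mul_mem_iff_of_index_two h2, inv_mem_iff]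
      exact iff_of_false hc hxH
    simp only [sDot, if_neg hxH, apply_eq_inv_apply_mul_apply_mul_of_eqOn hφψ hcx hcomm]

end AgreeOnSubgroup

theorem sDot_action_transitive_general {Γ G : Type*} [Group Γ] [Group G] (H : Subgroup Γ)
    (h2 : H.index = 2) (c : Γ) (hc : c ∉ H) (φ φ' : Γ →* G)
    (hZ : ∀ h : G, (∀ x : H, h * φ x * h⁻¹ = φ x) ↔ h ∈ Subgroup.center G)
    (h : G) (hres : ∀ x : H, φ' x = h * φ x * h⁻¹) :
    (φ c)⁻¹ * h⁻¹ * φ' c * h ∈ Subgroup.center G ∧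
    ((φ c)⁻¹ * h⁻¹ * φ' c * h) ^ 2 = 1 ∧
    ∀ x : Γ, sDot H ((φ c)⁻¹ * h⁻¹ * φ' c * h) ⇑φ x = h⁻¹ * φ' x * h := by
  set ψ : Γ →* G := (MulAut.conj h⁻¹).toMonoidHom.comp φ'
  have hψ (x : Γ) : ψ x = h⁻¹ * φ' x * h := by simp [ψ]
  have hφψ : ∀ x ∈ H, ψ x = φ x := fun x hx => by rw [hψ, hres ⟨x, hx⟩]; group
  have hs : (φ c)⁻¹ * h⁻¹ * φ' c * h = (φ c)⁻¹ * ψ c := by rw [hψ]; group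
  simp only [hs, ← hψ]
  have hcen : (φ c)⁻¹ * ψ c ∈ Subgroup.center G :=
    (hZ _).mp (inv_apply_mul_apply_conj_eq_of_eqOn (indexTwoNormal H h2) hφψ c)
  have hcomm : Commute ((φ c)⁻¹ * ψ c) (φ c) := (Subgroup.mem_center_iff.mp hcen (φ c)).symm
  have hcc : c * c ∈ H := (Subgroup.mul_mem_iff_of_index_two h2).mpr Iff.rfl
  exact ⟨hcen, inv_apply_mul_apply_sq_eq_one_of_eqOn hφψ hcc hcomm,
    sDot_inv_apply_mul_apply_eq_of_eqOn h2 hφψ hc hcomm⟩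

/-- If `φ, φ' : Γ → G` have good restrictions to `Γ̃` and
`φ'|_{Γ̃} = Ad_h ∘ (φ|_{Γ̃})`, then `s := φ(c)⁻¹ h⁻¹ φ'(c) h` is central with `s² = e`,
and `s·φ = Ad_{h⁻¹} ∘ φ'`; hence the action is transitive on fibers of restriction. -/
theorem sDot_action_transitive {Γ G : Type*} [Group Γ] [Group G] (H : Subgroup Γ)
    (h2 : H.index = 2) (c : Γ) (hc : c ∉ H) (φ φ' : Γ →* G)
    (hZ : ∀ h : G, (∀ x : H, h * φ x * h⁻¹ = φ x) ↔ h ∈ Subgroup.center G)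
    (hZ' : ∀ h : G, (∀ x : H, h * φ' x * h⁻¹ = φ' x) ↔ h ∈ Subgroup.center G)
    (h : G) (hres : ∀ x : H, φ' x = h * φ x * h⁻¹) :
    (φ c)⁻¹ * h⁻¹ * φ' c * h ∈ Subgroup.center G ∧
    ((φ c)⁻¹ * h⁻¹ * φ' c * h) ^ 2 = 1 ∧
    ∀ x : Γ, sDot H ((φ c)⁻¹ * h⁻¹ * φ' c * h) ⇑φ x = h⁻¹ * φ' x * h :=
  sDot_action_transitive_general H h2 c hc φ φ' hZ h hres
end
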